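/- Set λ1 = (h1+h2−l1−l2−α1−α2−β+2)/2 and λ2 = (h1+h2−l1−l2−α1−α2+β+2)/2. Let λ ∈ {λ1, λ2}, let α ∈ {α1, α2}, and assume n := −λ−α is a non-negative integer. Let V⁴ be the complex vector space of functions on (0,∞) spanned by the monomials x ↦ x^{λ+k} for k = 0, 1, …, n. Then the operator A⁴ preserves V⁴, i.e., A⁴ g ∈ V⁴ for every g ∈ V⁴. -/

import Mathlib

/-!
On `(0, ∞)` the operator sends `x ^ μ` to a combination of `x ^ (μ + 1)`, `x ^ μ` and
`x ^ (μ - 1)`. The coefficient of `x ^ (μ + 1)` factors as `(q ^ (-μ) - q ^ a1) (1 - q ^ (a2 + μ))`,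
so it vanishes at the top exponent `μ = λ + n = -α`. The coefficient of `x ^ (μ - 1)` is
`(q ^ u + q ^ v - q ^ m (q ^ (β/2) + q ^ (-β/2))) t1 t2` with `u = h1 + h2 + 1 - μ` and
`u + v = 2m`, so it vanishes when `u = m ± β/2`, i.e. at the bottom exponent `μ = λ ∈ {λ1, λ2}`.
Hence every monomial of the span is sent into the span, and linearity does the rest.
-/

noncomputable def qp (q r : ℝ) : ℂ := ((q ^ r : ℝ) : ℂ)

noncomputable def A4 (q h1 h2 l1 l2 a1 a2 b : ℝ) (t1 t2 : ℂ) (g : ℝ → ℂ) (x : ℝ) : ℂ :=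
  (x : ℂ)⁻¹ * ((x : ℂ) - qp q (h1 + 1/2) * t1) * ((x : ℂ) - qp q (h2 + 1/2) * t2) * g (x / q)
    + qp q (a1 + a2) * (x : ℂ)⁻¹ * ((x : ℂ) - qp q (l1 - 1/2) * t1) * ((x : ℂ) - qp q (l2 - 1/2) * t2) * g (q * x)
    - ((qp q a1 + qp q a2) * (x : ℂ)
        + qp q ((h1 + h2 + l1 + l2 + a1 + a2) / 2) * (qp q (b / 2) + qp q (-b / 2)) * t1 * t2 * (x : ℂ)⁻¹) * g x

open Set Submodule

section qp

variable {q : ℝ}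

lemma qp_add (hq : 0 < q) (r s : ℝ) : qp q (r + s) = qp q r * qp q s := by
  simp only [qp, Real.rpow_add hq, Complex.ofReal_mul]

lemma qp_neg (hq : 0 < q) (r : ℝ) : qp q (-r) = (qp q r)⁻¹ := by
  simp only [qp, Real.rpow_neg hq.le, Complex.ofReal_inv]

lemma qp_ne_zero (hq : 0 < q) (r : ℝ) : qp q r ≠ 0 :=
  Complex.ofReal_ne_zero.mpr (Real.rpow_pos_of_pos hq r).ne'

end qp

noncomputable def A4Linear (q h1 h2 l1 l2 a1 a2 b : ℝ) (t1 t2 : ℂ) : (ℝ → ℂ) →ₗ[ℂ] (ℝ → ℂ) where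
  toFun := A4 q h1 h2 l1 l2 a1 a2 b t1 t2
  map_add' f g := by funext x; simp only [A4, Pi.add_apply]; ring
  map_smul' c f := by funext x; simp only [A4, Pi.smul_apply, smul_eq_mul, RingHom.id_apply]; ring

lemma exists_mem_eqOn_of_mem_span {R N X M : Type*} [Semiring R] [AddCommMonoid N] [Module R N]
    [AddCommMonoid M] [Module R M] (L : N →ₗ[R] X → M) (s : Set X) {S : Set N}
    {V : Submodule R (X → M)} (hS : ∀ g ∈ S, ∃ f ∈ V, EqOn (L g) f s) {g : N} (hg : g ∈ span R S) :
    ∃ f ∈ V, EqOn (L g) f s := by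
  induction hg using Submodule.span_induction with
  | mem g hg => exact hS g hg
  | zero => exact ⟨0, V.zero_mem, by simp [EqOn]⟩
  | add g₁ g₂ _ _ ih₁ ih₂ =>
    obtain ⟨f₁, hf₁, h₁⟩ := ih₁
    obtain ⟨f₂, hf₂, h₂⟩ := ih₂
    exact ⟨f₁ + f₂, V.add_mem hf₁ hf₂, fun x hx => by simp [h₁ hx, h₂ hx]⟩
  | smul c g _ ih =>
    obtain ⟨f, hf, h⟩ := ih
    exact ⟨c • f, V.smul_mem c hf, fun x hx => by simp [h hx]⟩

noncomputable def powFun (r : ℝ) : ℝ → ℂ := fun x => ((x ^ r : ℝ) : ℂ)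

section coefficients

variable (q h1 h2 l1 l2 a1 a2 b : ℝ) (t1 t2 : ℂ) (μ : ℝ)

noncomputable def raiseCoeff : ℂ := (qp q (-μ) - qp q a1) * (1 - qp q (a2 + μ))

noncomputable def diagCoeff : ℂ :=
  -(qp q (-μ) * (qp q (h1 + 1/2) * t1 + qp q (h2 + 1/2) * t2)
    + qp q (a1 + a2 + μ) * (qp q (l1 - 1/2) * t1 + qp q (l2 - 1/2) * t2))

noncomputable def lowerCoeff : ℂ :=
  (qp q (h1 + h2 + 1 - μ) + qp q (l1 + l2 + a1 + a2 - 1 + μ)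
    - qp q ((h1 + h2 + l1 + l2 + a1 + a2) / 2) * (qp q (b / 2) + qp q (-b / 2))) * t1 * t2

end coefficients

lemma A4_powFun {q : ℝ} (hq : 0 < q) (h1 h2 l1 l2 a1 a2 b : ℝ) (t1 t2 : ℂ) (μ : ℝ) {x : ℝ}
    (hx : 0 < x) :
    A4 q h1 h2 l1 l2 a1 a2 b t1 t2 (powFun μ) x =
      raiseCoeff q a1 a2 μ * powFun (μ + 1) x + diagCoeff q h1 h2 l1 l2 a1 a2 t1 t2 μ * powFun μ x
        + lowerCoeff q h1 h2 l1 l2 a1 a2 b t1 t2 μ * powFun (μ - 1) x := by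
  have hx₀ : (x : ℂ) ≠ 0 := Complex.ofReal_ne_zero.mpr hx.ne'
  have hμ := qp_ne_zero hq μ
  have hdiv : powFun μ (x / q) = powFun μ x * (qp q μ)⁻¹ := by
    simp only [powFun, qp]
    rw [Real.div_rpow hx.le hq.le, Complex.ofReal_div, div_eq_mul_inv]
  have hmul : powFun μ (q * x) = qp q μ * powFun μ x := by
    simp only [powFun, qp, Real.mul_rpow hq.le hx.le, Complex.ofReal_mul]
  have hsucc : powFun (μ + 1) x = powFun μ x * x := by
    simp only [powFun, Real.rpow_add_one hx.ne', Complex.ofReal_mul]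
  have hpred : powFun (μ - 1) x = powFun μ x / x := by
    simp only [powFun, Real.rpow_sub_one hx.ne', Complex.ofReal_div]
  have hh : qp q (h1 + h2 + 1 - μ) = qp q (h1 + 1/2) * qp q (h2 + 1/2) * (qp q μ)⁻¹ := by
    rw [show h1 + h2 + 1 - μ = (h1 + 1/2) + (h2 + 1/2) + -μ by ring, qp_add hq, qp_add hq,
      qp_neg hq]
  have hl : qp q (l1 + l2 + a1 + a2 - 1 + μ)
      = qp q (l1 - 1/2) * qp q (l2 - 1/2) * qp q a1 * qp q a2 * qp q μ := by
    rw [show l1 + l2 + a1 + a2 - 1 + μ = (l1 - 1/2) + (l2 - 1/2) + a1 + a2 + μ by ring]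
    simp only [qp_add hq]
  simp only [A4, raiseCoeff, diagCoeff, lowerCoeff, hdiv, hmul, hsucc, hpred, hh, hl, qp_neg hq,
    qp_add hq]
  field_simp
  ring

lemma raiseCoeff_eq_zero {q a1 a2 μ : ℝ} (hμ : μ = -a1 ∨ μ = -a2) : raiseCoeff q a1 a2 μ = 0 := by
  rcases hμ with rfl | rfl <;> simp [raiseCoeff, qp]

lemma lowerCoeff_eq_zero {q : ℝ} (hq : 0 < q) {h1 h2 l1 l2 a1 a2 b μ : ℝ} (t1 t2 : ℂ)
    (hμ : μ = (h1 + h2 - l1 - l2 - a1 - a2 - b + 2) / 2 ∨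
      μ = (h1 + h2 - l1 - l2 - a1 - a2 + b + 2) / 2) :
    lowerCoeff q h1 h2 l1 l2 a1 a2 b t1 t2 μ = 0 := by
  set m := (h1 + h2 + l1 + l2 + a1 + a2) / 2
  rcases hμ with rfl | rfl
  · rw [lowerCoeff, show h1 + h2 + 1 - _ = m + b / 2 by ring,
      show l1 + l2 + a1 + a2 - 1 + _ = m + -b / 2 by ring, qp_add hq, qp_add hq]
    ring
  · rw [lowerCoeff, show h1 + h2 + 1 - _ = m + -b / 2 by ring,
      show l1 + l2 + a1 + a2 - 1 + _ = m + b / 2 by ring, qp_add hq, qp_add hq]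
    ring

noncomputable def powSpan (lam : ℝ) (n : ℕ) : Submodule ℂ (ℝ → ℂ) :=
  span ℂ {f | ∃ k : ℕ, k ≤ n ∧ f = powFun (lam + k)}

lemma powFun_mem_powSpan {lam : ℝ} {n k : ℕ} (hk : k ≤ n) : powFun (lam + k) ∈ powSpan lam n :=
  subset_span ⟨k, hk, rfl⟩

lemma A4_powFun_mem_powSpan {q : ℝ} (hq : 0 < q) {h1 h2 l1 l2 a1 a2 b : ℝ} (t1 t2 : ℂ)
    {lam α : ℝ} (hlam : lam = (h1 + h2 - l1 - l2 - a1 - a2 - b + 2) / 2 ∨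
      lam = (h1 + h2 - l1 - l2 - a1 - a2 + b + 2) / 2)
    (hα : α = a1 ∨ α = a2) {n : ℕ} (hn : (n : ℝ) = -lam - α) {k : ℕ} (hk : k ≤ n) :
    ∃ f ∈ powSpan lam n, EqOn (A4 q h1 h2 l1 l2 a1 a2 b t1 t2 (powFun (lam + k))) f (Ioi 0) := by
  set μ := lam + k
  refine ⟨raiseCoeff q a1 a2 μ • powFun (μ + 1) + diagCoeff q h1 h2 l1 l2 a1 a2 t1 t2 μ • powFun μ
      + lowerCoeff q h1 h2 l1 l2 a1 a2 b t1 t2 μ • powFun (μ - 1), ?_,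
    fun x hx => A4_powFun hq h1 h2 l1 l2 a1 a2 b t1 t2 μ hx⟩
  refine add_mem (add_mem ?raise (smul_mem _ _ (powFun_mem_powSpan hk))) ?lower
  case raise =>
    rcases hk.lt_or_eq with hlt | rfl
    · have hsucc : μ + 1 = lam + (k + 1 : ℕ) := by push_cast; ring
      exact hsucc ▸ smul_mem _ _ (powFun_mem_powSpan hlt)
    · have hμ : μ = -a1 ∨ μ = -a2 := by rcases hα with rfl | rfl <;> [left; right] <;> linarith
      simp [raiseCoeff_eq_zero hμ]
  case lower =>
    cases k with
    | zero => simp [μ, lowerCoeff_eq_zero hq t1 t2 hlam]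
    | succ j =>
      have hpred : μ - 1 = lam + j := by push_cast [μ]; ring
      exact hpred ▸ smul_mem _ _ (powFun_mem_powSpan (Nat.le_of_succ_le hk))

theorem stmt11_general (q h1 h2 l1 l2 a1 a2 β : ℝ) (hq : 0 < q)
    (t1 t2 : ℂ)
    (lam α : ℝ)
    (hlam : lam = (h1 + h2 - l1 - l2 - a1 - a2 - β + 2) / 2 ∨
      lam = (h1 + h2 - l1 - l2 - a1 - a2 + β + 2) / 2)
    (hα : α = a1 ∨ α = a2)
    (n : ℕ) (hn : (n : ℝ) = -lam - α)
    (V : Submodule ℂ (ℝ → ℂ))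
    (hV : V = Submodule.span ℂ
      {f : ℝ → ℂ | ∃ k : ℕ, k ≤ n ∧ f = fun x : ℝ => ((x ^ (lam + (k : ℝ)) : ℝ) : ℂ)})
    (g : ℝ → ℂ) (hg : g ∈ V) :
    ∃ f ∈ V, ∀ x : ℝ, 0 < x → A4 q h1 h2 l1 l2 a1 a2 β t1 t2 g x = f x := by
  subst hV
  refine exists_mem_eqOn_of_mem_span (A4Linear q h1 h2 l1 l2 a1 a2 β t1 t2) (Ioi 0) ?_ hg
  rintro _ ⟨k, hk, rfl⟩
  exact A4_powFun_mem_powSpan hq t1 t2 hlam hα hn hk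

theorem stmt11 (q h1 h2 l1 l2 a1 a2 β : ℝ) (hq : 0 < q) (hq1 : q ≠ 1)
    (t1 t2 : ℂ) (ht1 : t1 ≠ 0) (ht2 : t2 ≠ 0)
    (lam α : ℝ)
    (hlam : lam = (h1 + h2 - l1 - l2 - a1 - a2 - β + 2) / 2 ∨
      lam = (h1 + h2 - l1 - l2 - a1 - a2 + β + 2) / 2)
    (hα : α = a1 ∨ α = a2)
    (n : ℕ) (hn : (n : ℝ) = -lam - α)
    (V : Submodule ℂ (ℝ → ℂ))
    (hV : V = Submodule.span ℂ
      {f : ℝ → ℂ | ∃ k : ℕ, k ≤ n ∧ f = fun x : ℝ => ((x ^ (lam + (k : ℝ)) : ℝ) : ℂ)})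
    (g : ℝ → ℂ) (hg : g ∈ V) :
    ∃ f ∈ V, ∀ x : ℝ, 0 < x → A4 q h1 h2 l1 l2 a1 a2 β t1 t2 g x = f x :=
  stmt11_general q h1 h2 l1 l2 a1 a2 β hq t1 t2 lam α hlam hα n hn V hV g hg
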